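/- arXiv:1702.07513 — 4 statements merged into one kernel-verified Lean document; each statement's English description precedes it below -/
import Mathlib

section
/- Let F : ℝⁿ \ {0} → ℝⁿ be the radial map F(x) = φ(|x|)·x/|x| with φ differentiable, φ' > 0, and x·φ'(x) > φ(x) for all x > 0. Then for every x ≠ 0 and every k-dimensional linear subspace V ⊆ ℝⁿ (1 ≤ k ≤ n), the absolute value of the determinant of the composition of DF(x) restricted to V with the orthogonal projection onto DF(x)(V) is at most φ'(|x|)·(φ(|x|)/|x|)^{k−1}. -/
open scoped RealInnerProductSpace

/-!
The derivative of `y ↦ (φ ‖y‖ / ‖y‖) • y` at `x ≠ 0` stretches the unit direction `e = x / ‖x‖`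
by `b = φ'(‖x‖)` and its orthogonal complement by `a = φ(‖x‖) / ‖x‖`. Hence the Gram matrix of
the images of an orthonormal family `v` is `a² I + (b² - a²) t tᵀ` with `tᵢ = ⟪e, vᵢ⟫`, whose
determinant is `a^(2(k-1)) (a² + (b² - a²) ‖t‖²)` by the matrix determinant lemma.
Bessel's inequality `‖t‖² ≤ 1` and `0 < a < b` bound this by `(b a^(k-1))²`.
-/

section Radial

variable {E : Type*} [NormedAddCommGroup E] [InnerProductSpace ℝ E]

theorem hasFDerivAt_norm_of_ne_zero {x : E} (hx : x ≠ 0) :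
    HasFDerivAt (fun y : E => ‖y‖) (‖x‖⁻¹ • innerSL ℝ x) x := by
  have hsqrt : HasDerivAt Real.sqrt (1 / (2 * ‖x‖)) (‖x‖ ^ 2) := by
    simpa [Real.sqrt_sq (norm_nonneg x)] using
      Real.hasDerivAt_sqrt (pow_pos (norm_pos_iff.2 hx) 2).ne'
  have h := hsqrt.comp_hasFDerivAt x (hasStrictFDerivAt_norm_sq x).hasFDerivAt
  simp only [Function.comp_def, Real.sqrt_sq (norm_nonneg _)] at h
  refine h.congr_fderiv ?_
  ext u
  simp only [one_div, mul_inv_rev, smul_apply, coe_innerSL_apply, nsmul_eq_mul, Nat.cast_ofNat,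
    smul_eq_mul]
  field_simp

noncomputable def radialStretch (e : E) (a b : ℝ) : E →L[ℝ] E :=
  a • ContinuousLinearMap.id ℝ E + (b - a) • (innerSL ℝ e).smulRight e

theorem radialStretch_apply (e : E) (a b : ℝ) (u : E) :
    radialStretch e a b u = a • u + ((b - a) * ⟪e, u⟫) • e := by
  simp [radialStretch, smul_smul]

theorem hasFDerivAt_radial {φ : ℝ → ℝ} {φ' : ℝ} {x : E} (hx : x ≠ 0)
    (hφ : HasDerivAt φ φ' ‖x‖) :
    HasFDerivAt (fun y => (φ ‖y‖ / ‖y‖) • y)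
      (radialStretch (‖x‖⁻¹ • x) (φ ‖x‖ / ‖x‖) φ') x := by
  have hr : ‖x‖ ≠ 0 := norm_ne_zero_iff.2 hx
  have hquot : HasDerivAt (fun t => φ t / t) ((φ' * ‖x‖ - φ ‖x‖ * 1) / ‖x‖ ^ 2) ‖x‖ :=
    hφ.div (hasDerivAt_id _) hr
  refine ((hquot.comp_hasFDerivAt x (hasFDerivAt_norm_of_ne_zero hx)).smul
    (hasFDerivAt_id x)).congr_fderiv ?_
  ext u
  simp only [add_apply, smul_apply, ContinuousLinearMap.smulRight_apply, smul_eq_mul,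
    ContinuousLinearMap.coe_id', id_eq, Function.comp_apply, innerSL_apply_apply,
    radialStretch_apply, real_inner_smul_left, smul_smul]
  match_scalars <;> field_simp

variable {e : E} {a b : ℝ}

theorem inner_radialStretch (he : ‖e‖ = 1) (u w : E) :
    ⟪radialStretch e a b u, radialStretch e a b w⟫ =
      a ^ 2 * ⟪u, w⟫ + (b ^ 2 - a ^ 2) * (⟪e, u⟫ * ⟪e, w⟫) := by
  simp only [radialStretch_apply, inner_add_left, inner_add_right, real_inner_smul_left,
    real_inner_smul_right, real_inner_self_eq_norm_sq, he, real_inner_comm u e]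
  ring

variable {ι : Type*} [DecidableEq ι] {v : ι → E}

theorem gram_radialStretch (he : ‖e‖ = 1) (ha : a ≠ 0) (hv : Orthonormal ℝ v) :
    (Matrix.of fun i j => ⟪radialStretch e a b (v i), radialStretch e a b (v j)⟫) =
      a ^ 2 • (1 + Matrix.replicateCol Unit (fun i => (b ^ 2 - a ^ 2) / a ^ 2 * ⟪e, v i⟫) *
        Matrix.replicateRow Unit (fun j => ⟪e, v j⟫)) := by
  ext i j
  simp only [Matrix.of_apply, inner_radialStretch he, orthonormal_iff_ite.1 hv,
    Matrix.smul_apply, Matrix.add_apply, Matrix.mul_apply, Matrix.replicateCol_apply,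
    Matrix.replicateRow_apply, Finset.univ_unique, Finset.sum_singleton, Matrix.one_apply,
    smul_eq_mul]
  split_ifs <;> field_simp

theorem det_gram_radialStretch [Fintype ι] [Nonempty ι] (he : ‖e‖ = 1) (ha : a ≠ 0)
    (hv : Orthonormal ℝ v) :
    (Matrix.of fun i j => ⟪radialStretch e a b (v i), radialStretch e a b (v j)⟫).det =
      (a ^ 2) ^ (Fintype.card ι - 1) * (a ^ 2 + (b ^ 2 - a ^ 2) * ∑ i, ⟪e, v i⟫ ^ 2) := by
  obtain ⟨m, hm⟩ : ∃ m, Fintype.card ι = m + 1 :=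
    Nat.exists_eq_add_one_of_ne_zero Fintype.card_ne_zero
  rw [gram_radialStretch he ha hv, Matrix.det_smul,
    Matrix.det_one_add_replicateCol_mul_replicateRow, hm, Nat.add_sub_cancel, dotProduct]
  have hterm : ∀ i, ⟪e, v i⟫ * ((b ^ 2 - a ^ 2) / a ^ 2 * ⟪e, v i⟫) =
      (b ^ 2 - a ^ 2) / a ^ 2 * ⟪e, v i⟫ ^ 2 := fun i => by ring
  simp_rw [hterm, ← Finset.mul_sum]
  field_simp
  ring

theorem sqrt_det_gram_radialStretch_le [Fintype ι] [Nonempty ι] (he : ‖e‖ = 1) (ha : 0 < a)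
    (hab : a ≤ b) (hv : Orthonormal ℝ v) :
    √(Matrix.of fun i j => ⟪radialStretch e a b (v i), radialStretch e a b (v j)⟫).det ≤
      b * a ^ (Fintype.card ι - 1) := by
  have hbessel : ∑ i, ⟪e, v i⟫ ^ 2 ≤ 1 := by
    simpa [he, real_inner_comm] using hv.sum_inner_products_le (s := Finset.univ) e
  have hdiag : a ^ 2 + (b ^ 2 - a ^ 2) * ∑ i, ⟪e, v i⟫ ^ 2 ≤ b ^ 2 := by
    nlinarith [mul_le_mul_of_nonneg_left hbessel (by nlinarith : 0 ≤ b ^ 2 - a ^ 2)]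
  have hb : 0 < b := ha.trans_le hab
  rw [det_gram_radialStretch he ha.ne' hv, Real.sqrt_le_iff]
  refine ⟨by positivity, ?_⟩
  calc (a ^ 2) ^ (Fintype.card ι - 1) * (a ^ 2 + (b ^ 2 - a ^ 2) * ∑ i, ⟪e, v i⟫ ^ 2)
      ≤ (a ^ 2) ^ (Fintype.card ι - 1) * b ^ 2 := by gcongr
    _ = (b * a ^ (Fintype.card ι - 1)) ^ 2 := by ring

end Radial

theorem stmt_2_general (n k : ℕ) (hk1 : 1 ≤ k) (φ : ℝ → ℝ)
    (hφpos : ∀ r > 0, φ r > 0)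
    (hφrad : ∀ r > 0, r * deriv φ r > φ r)
    (F : EuclideanSpace ℝ (Fin n) → EuclideanSpace ℝ (Fin n))
    (hF : ∀ x, x ≠ 0 → F x = (φ ‖x‖ / ‖x‖) • x)
    (x : EuclideanSpace ℝ (Fin n)) (hx : x ≠ 0)
    (D : EuclideanSpace ℝ (Fin n) →L[ℝ] EuclideanSpace ℝ (Fin n))
    (hD : HasFDerivAt F D x)
    (v : Fin k → EuclideanSpace ℝ (Fin n))
    (hvON : Orthonormal ℝ v) :
    Real.sqrt (Matrix.det (Matrix.of fun i j => ⟪D (v i), D (v j)⟫)) ≤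
      deriv φ ‖x‖ * (φ ‖x‖ / ‖x‖) ^ (k - 1) := by
  have hr : 0 < ‖x‖ := norm_pos_iff.2 hx
  have ha : 0 < φ ‖x‖ / ‖x‖ := div_pos (hφpos _ hr) hr
  have hab : φ ‖x‖ / ‖x‖ < deriv φ ‖x‖ := by
    rw [div_lt_iff₀ hr, mul_comm]
    exact hφrad _ hr
  -- `deriv` is `0` at points of non-differentiability
  have hφ : HasDerivAt φ (deriv φ ‖x‖) ‖x‖ :=
    (differentiableAt_of_deriv_ne_zero (ha.trans hab).ne').hasDerivAt
  have hFx : F =ᶠ[nhds x] fun y => (φ ‖y‖ / ‖y‖) • y := (eventually_ne_nhds hx).mono hF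
  obtain rfl := hD.unique ((hasFDerivAt_radial hx hφ).congr_of_eventuallyEq hFx)
  have : Nonempty (Fin k) := ⟨⟨0, hk1⟩⟩
  simpa using sqrt_det_gram_radialStretch_le (norm_smul_inv_norm (𝕜 := ℝ) hx) ha hab.le hvON

/-- For the radial map `F(x) = φ(|x|) • x/|x|` with `φ' > 0` and
`x·φ'(x) > φ(x)`, at every `x ≠ 0` and every `k`-dimensional subspace `V`, the factor
by which the derivative `DF(x)` scales `k`-dimensional volume on `V` (equivalently, the
absolute determinant of `DF(x)|_V` followed by the orthogonal projection onto
`DF(x)(V)`, expressed here via Gram determinants of an orthonormal family spanning the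
`k`-dimensional directions) is at most `φ'(|x|)·(φ(|x|)/|x|)^(k-1)`. -/
theorem stmt_2 (n k : ℕ) (hk1 : 1 ≤ k) (hkn : k ≤ n) (φ : ℝ → ℝ)
    (hφpos : ∀ r > 0, φ r > 0)
    (hφdiff : ∀ r > 0, DifferentiableAt ℝ φ r)
    (hφ' : ∀ r > 0, deriv φ r > 0)
    (hφrad : ∀ r > 0, r * deriv φ r > φ r)
    (F : EuclideanSpace ℝ (Fin n) → EuclideanSpace ℝ (Fin n))
    (hF : ∀ x, x ≠ 0 → F x = (φ ‖x‖ / ‖x‖) • x)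
    (x : EuclideanSpace ℝ (Fin n)) (hx : x ≠ 0)
    (D : EuclideanSpace ℝ (Fin n) →L[ℝ] EuclideanSpace ℝ (Fin n))
    (hD : HasFDerivAt F D x)
    (V : Submodule ℝ (EuclideanSpace ℝ (Fin n)))
    (hV : Module.finrank ℝ V = k)
    (v : Fin k → EuclideanSpace ℝ (Fin n))
    (hvV : ∀ i, v i ∈ V)
    (hvON : Orthonormal ℝ v) :
    Real.sqrt (Matrix.det (Matrix.of fun i j => ⟪D (v i), D (v j)⟫)) ≤
      deriv φ ‖x‖ * (φ ‖x‖ / ‖x‖) ^ (k - 1) :=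
  stmt_2_general n k hk1 φ hφpos hφrad F hF x hx D hD v hvON
end

section
/- Let μ be a finite measure on ℝ^ℓ with log-concave density ρ supported in a convex body L ⊆ ℝ^ℓ, and suppose ρ attains its maximum at a point c ∈ L. Then for every t ∈ [0,1], μ(t·(L − c) + c) ≥ t^ℓ · μ(L). -/
open MeasureTheory Set Module AffineMap

/-!
The homothety `T = homothety c t` has constant Jacobian `t ^ ℓ`, so
`μ (T '' L) = t ^ ℓ * ∫_L ρ (T y) dy`. For `y ∈ L` we have `T y = (1 - t) c + t y`, and
log-concavity together with `ρ y ≤ ρ c` gives `ρ y ≤ ρ c ^ (1 - t) * ρ y ^ t ≤ ρ (T y)`;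
hence the integral dominates `∫_L ρ = μ L`.
-/

theorem apply_le_apply_homothety {E : Type*} [AddCommGroup E] [Module ℝ E] {ρ : E → ℝ}
    {L : Set E}
    (hρ : ∀ x ∈ L, ∀ y ∈ L, ∀ a b : ℝ, 0 ≤ a → 0 ≤ b → a + b = 1 →
      ρ x ^ a * ρ y ^ b ≤ ρ (a • x + b • y))
    (hρ0 : ∀ x ∈ L, 0 ≤ ρ x) {c : E} (hc : c ∈ L) (hmax : ∀ x ∈ L, ρ x ≤ ρ c)
    {y : E} (hy : y ∈ L) {t : ℝ} (ht : t ∈ Icc (0 : ℝ) 1) :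
    ρ y ≤ ρ (homothety c t y) := by
  have hy0 := hρ0 y hy
  calc ρ y = ρ y ^ (1 - t) * ρ y ^ t := by
        rw [← Real.rpow_add' hy0 (by norm_num), sub_add_cancel, Real.rpow_one]
    _ ≤ ρ c ^ (1 - t) * ρ y ^ t := by
        gcongr
        · exact sub_nonneg.2 ht.2
        · exact hmax y hy
    _ ≤ ρ ((1 - t) • c + t • y) :=
        hρ c hc y hy _ _ (sub_nonneg.2 ht.2) ht.1 (sub_add_cancel _ _)
    _ = ρ (homothety c t y) := by
        rw [homothety_eq_lineMap, lineMap_apply_module]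

-- In dimension `0` the factor is `0 ^ 0 = 1`, and the inequality holds because `E` is a point.
theorem measure_le_measure_image_homothety_zero {E : Type*} [AddCommGroup E] [Module ℝ E]
    [FiniteDimensional ℝ E] [MeasurableSpace E] (ν : Measure E) (c : E) (s : Set E) :
    ENNReal.ofReal (0 ^ finrank ℝ E) * ν s ≤ ν (homothety c (0 : ℝ) '' s) := by
  rcases (finrank ℝ E).eq_zero_or_pos with h | h
  · have : Subsingleton E := Module.finrank_zero_iff.mp h
    rw [h, pow_zero, ENNReal.ofReal_one, one_mul]
    exact measure_mono fun x hx => ⟨x, hx, Subsingleton.elim _ _⟩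
  · simp [zero_pow h.ne']

theorem hasFDerivAt_homothety {E : Type*} [NormedAddCommGroup E] [NormedSpace ℝ E]
    (c : E) (t : ℝ) (x : E) :
    HasFDerivAt (homothety c t : E →ᵃ[ℝ] E) (t • ContinuousLinearMap.id ℝ E) x := by
  have h : ⇑(homothety c t : E →ᵃ[ℝ] E) = fun y => t • (y - c) + c := by
    ext y; simp [homothety_apply]
  rw [h]
  exact (((hasFDerivAt_id x).sub_const c).const_smul t).add_const c

section AddHaar

variable {E : Type*} [NormedAddCommGroup E] [NormedSpace ℝ E] [FiniteDimensional ℝ E]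
  [MeasurableSpace E] [BorelSpace E] (μ : Measure E) [μ.IsAddHaarMeasure]

theorem lintegral_image_homothety {s : Set E} (hs : MeasurableSet s) (c : E) {t : ℝ}
    (ht : t ≠ 0) (g : E → ENNReal) :
    ∫⁻ x in homothety c t '' s, g x ∂μ =
      ENNReal.ofReal (|t| ^ finrank ℝ E) * ∫⁻ y in s, g (homothety c t y) ∂μ := by
  rw [lintegral_image_eq_lintegral_abs_det_fderiv_mul μ hs
      (fun x _ => (hasFDerivAt_homothety c t x).hasFDerivWithinAt)
      ((homothety_injective c ht).injOn) g]
  have hdet : (t • ContinuousLinearMap.id ℝ E).det = t ^ finrank ℝ E := by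
    simp [ContinuousLinearMap.det, LinearMap.det_smul]
  rw [hdet, abs_pow, lintegral_const_mul' _ _ ENNReal.ofReal_ne_top]

theorem pow_mul_withDensity_le_withDensity_image_homothety {f : E → ENNReal} {s : Set E}
    (hs : MeasurableSet s) (c : E) {t : ℝ} (ht : 0 ≤ t)
    (hf : ∀ y ∈ s, f y ≤ f (homothety c t y)) :
    ENNReal.ofReal (t ^ finrank ℝ E) * μ.withDensity f s ≤
      μ.withDensity f (homothety c t '' s) := by
  rcases ht.eq_or_lt with rfl | ht_pos
  · exact measure_le_measure_image_homothety_zero _ c s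
  rw [withDensity_apply' _ s, withDensity_apply' _ _, lintegral_image_homothety μ hs c ht_pos.ne',
    abs_of_pos ht_pos]
  exact mul_le_mul_right (setLIntegral_mono' hs hf) _

end AddHaar

theorem stmt_7_general (l : ℕ) (ρ : EuclideanSpace ℝ (Fin l) → ℝ)
    (μ : Measure (EuclideanSpace ℝ (Fin l)))
    (hμ : μ = volume.withDensity (fun x => ENNReal.ofReal (ρ x)))
    (L : Set (EuclideanSpace ℝ (Fin l)))
    (hLcomp : IsCompact L)
    (hρnonneg : ∀ x, 0 ≤ ρ x)
    (hρlogconc : ∀ x ∈ L, ∀ y ∈ L, ∀ a b : ℝ, 0 ≤ a → 0 ≤ b → a + b = 1 →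
      ρ x ^ a * ρ y ^ b ≤ ρ (a • x + b • y))
    (c : EuclideanSpace ℝ (Fin l)) (hc : c ∈ L)
    (hmax : ∀ x, ρ x ≤ ρ c) :
    ∀ t ∈ Set.Icc (0 : ℝ) 1,
      ENNReal.ofReal (t ^ l) * μ L ≤ μ ((fun y => c + t • (y - c)) '' L) := by
  intro t ht
  have himage : (fun y => c + t • (y - c)) '' L = homothety c t '' L := by
    congr 1; ext y; simp [homothety_apply, add_comm]
  have hmono : ∀ y ∈ L, ENNReal.ofReal (ρ y) ≤ ENNReal.ofReal (ρ (homothety c t y)) :=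
    fun y hy => ENNReal.ofReal_le_ofReal <|
      apply_le_apply_homothety hρlogconc (fun x _ => hρnonneg x) hc (fun x _ => hmax x) hy ht
  subst hμ
  rw [himage]
  simpa [finrank_euclideanSpace_fin] using
    pow_mul_withDensity_le_withDensity_image_homothety volume hLcomp.measurableSet c ht.1 hmono

/-- if `μ` is a finite measure on `ℝ^ℓ` with log-concave density `ρ`
supported in a convex body `L`, and `ρ` attains its maximum at `c ∈ L`, then for every
`t ∈ [0,1]`, `μ(t·(L−c)+c) ≥ t^ℓ · μ(L)`. -/
theorem stmt_7 (l : ℕ) (ρ : EuclideanSpace ℝ (Fin l) → ℝ)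
    (μ : Measure (EuclideanSpace ℝ (Fin l)))
    (hμ : μ = volume.withDensity (fun x => ENNReal.ofReal (ρ x)))
    (hfin : IsFiniteMeasure μ)
    (L : Set (EuclideanSpace ℝ (Fin l)))
    (hLconv : Convex ℝ L) (hLcomp : IsCompact L) (hLint : (interior L).Nonempty)
    (hρnonneg : ∀ x, 0 ≤ ρ x)
    (hρsupp : ∀ x, x ∉ L → ρ x = 0)
    (hρlogconc : ∀ x ∈ L, ∀ y ∈ L, ∀ a b : ℝ, 0 ≤ a → 0 ≤ b → a + b = 1 →
      ρ x ^ a * ρ y ^ b ≤ ρ (a • x + b • y))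
    (c : EuclideanSpace ℝ (Fin l)) (hc : c ∈ L)
    (hmax : ∀ x, ρ x ≤ ρ c) :
    ∀ t ∈ Set.Icc (0 : ℝ) 1,
      ENNReal.ofReal (t ^ l) * μ L ≤ μ ((fun y => c + t • (y - c)) '' L) :=
  stmt_7_general l ρ μ hμ L hLcomp hρnonneg hρlogconc c hc hmax
end

section
/- Let M be a complete Riemannian manifold of dimension n, X ⊆ M bounded, ℓ ≥ 1, and 0 ≤ k ≤ n. Then the upper Minkowski k-content satisfies M̄_k(X, M × ℝ^ℓ) ≤ M̄_k(X, M), and the lower Minkowski k-content satisfies M̲_k(X, M × ℝ^ℓ) ≥ M̲_k(X, M), where X is identified with X × {0} ⊆ M × ℝ^ℓ. -/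
open MeasureTheory Filter

/-- The volume of the unit ball in `ℝ^m`. -/
noncomputable def unitBallVol (m : ℕ) : ℝ :=
  Real.pi ^ ((m : ℝ) / 2) / Real.Gamma ((m : ℝ) / 2 + 1)

/-- The lower Minkowski content of codimension `m` associated to the neighborhood-volume
function `ν` (`ν t` = volume of the `t`-neighborhood): `liminf_{t→0⁺} ν(t)/(v_m t^m)`. -/
noncomputable def lowerMinkOf (ν : ℝ → ENNReal) (m : ℕ) : ENNReal :=
  liminf (fun t : ℝ => ν t / ENNReal.ofReal (unitBallVol m * t ^ m))
    (nhdsWithin 0 (Set.Ioi (0 : ℝ)))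

/-- The upper Minkowski content of codimension `m` associated to `ν`. -/
noncomputable def upperMinkOf (ν : ℝ → ENNReal) (m : ℕ) : ENNReal :=
  limsup (fun t : ℝ => ν t / ENNReal.ofReal (unitBallVol m * t ^ m))
    (nhdsWithin 0 (Set.Ioi (0 : ℝ)))

/-!
The `t`-neighbourhood of `X × {0}` in `M × ℝ^ℓ` is the tube `{(x, y) | d(x, X)² + |y|² ≤ t²}`,
whose slice over `y` is the `√(t² - |y|²)`-neighbourhood of `X`. Cutting the `t`-ball of `ℝ^ℓ`
into `N` spherical shells of equal volume `v_ℓ t^ℓ / N` squeezes the volume of the tube between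
two Riemann sums of `V(√(t² - r²))`, where `V(s)` is the volume of the `s`-neighbourhood of `X`.
If `V(s) ≤ c v_m s^m` (resp. `≥`) for small `s`, these sums are compared with the same sums for
`X = {0} ⊆ ℝ^m`, whose tube is the `t`-ball of `ℝ^(m+ℓ)`. The upper and lower sums differ by a
single term of size `O(1/N)`, so letting `N → ∞` gives the bound `c v_(m+ℓ) t^(m+ℓ)`.
-/

open Metric Set Topology Module
open scoped ENNReal Function

lemma unitBallVol_pos (m : ℕ) : 0 < unitBallVol m :=
  div_pos (Real.rpow_pos_of_pos Real.pi_pos _) (Real.Gamma_pos_of_pos (by positivity))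

noncomputable def ballVolume (m : ℕ) (r : ℝ) : ℝ≥0∞ := ENNReal.ofReal (unitBallVol m * r ^ m)

lemma ballVolume_ne_zero (m : ℕ) {r : ℝ} (hr : 0 < r) : ballVolume m r ≠ 0 :=
  (ENNReal.ofReal_pos.2 (mul_pos (unitBallVol_pos m) (pow_pos hr m))).ne'

section BallVolume

variable {E : Type*} [NormedAddCommGroup E] [InnerProductSpace ℝ E] [FiniteDimensional ℝ E]
  [MeasurableSpace E] [BorelSpace E]

theorem InnerProductSpace.volume_closedBall_eq_ballVolume (x : E) {r : ℝ} (hr : 0 ≤ r) :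
    volume (closedBall x r) = ballVolume (finrank ℝ E) r := by
  rcases subsingleton_or_nontrivial E with hE | hE
  · have hball : closedBall x r = univ := eq_univ_of_forall fun y => by
      simp [Subsingleton.elim y x, hr]
    have hvol : volume (univ : Set E) = 1 := by
      rw [← (stdOrthonormalBasis ℝ E).volume_parallelepiped]
      congr
      refine (eq_univ_of_forall fun y => Subsingleton.elim (0 : E) y ▸ ?_).symm
      exact (mem_parallelepiped_iff _ _).2 ⟨0, by simp, by simp⟩
    simp [hball, hvol, finrank_zero_of_subsingleton, ballVolume, unitBallVol]
  · rw [InnerProductSpace.volume_closedBall, ← ENNReal.ofReal_pow hr,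
      ← ENNReal.ofReal_mul (by positivity), ballVolume, unitBallVol, Real.sqrt_eq_rpow,
      ← Real.rpow_natCast (Real.pi ^ (1 / 2 : ℝ)), ← Real.rpow_mul Real.pi_pos.le]
    congr 1
    ring_nf

end BallVolume

lemma Monotone.exists_mem_Icc_succ {r : ℕ → ℝ} (hr : Monotone r) {N : ℕ} (hN : N ≠ 0) {u : ℝ}
    (hu : u ∈ Icc (r 0) (r N)) : ∃ i < N, u ∈ Icc (r i) (r (i + 1)) := by
  rcases hu.1.eq_or_lt with h | h
  · exact ⟨0, Nat.pos_of_ne_zero hN, h ▸ left_mem_Icc.2 (hr zero_le_one)⟩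
  · have hmem : u ∈ ⋃ i ∈ Ico 0 N, Ioc (r i) (r (Order.succ i)) := by
      rw [hr.biUnion_Ico_Ioc_map_succ]
      exact ⟨h, hu.2⟩
    obtain ⟨i, hi, hui⟩ := mem_iUnion₂.1 hmem
    exact ⟨i, hi.2, Ioc_subset_Icc_self hui⟩

lemma MeasureTheory.Measure.sum_measure_inter_le {α ι : Type*} [MeasurableSpace α]
    (μ : Measure α) {s : ι → Set α} (hd : Pairwise (Disjoint on s))
    (hm : ∀ i, MeasurableSet (s i)) (T : Finset ι) (A : Set α) : ∑ i ∈ T, μ (A ∩ s i) ≤ μ A :=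
  calc ∑ i ∈ T, μ (A ∩ s i) = ∑ i : T, μ.restrict (s i) A := by
        rw [← Finset.sum_coe_sort]
        simp only [Measure.restrict_apply' (hm _)]
    _ = μ.restrict (⋃ i ∈ T, s i) A := by
        rw [Measure.restrict_biUnion_finset (hd.set_pairwise _) hm, Measure.sum_fintype,
          Measure.coe_finsetSum, Finset.sum_apply]
    _ ≤ μ A := Measure.restrict_apply_le _ _

section Tube

variable {M V : Type*} [MetricSpace M] [NormedAddCommGroup V] {X : Set M} {r : ℕ → ℝ} {t : ℝ}
  {N : ℕ}

def tube (X : Set M) (t : ℝ) : Set (M × V) := {p | infDist p.1 X ^ 2 + ‖p.2‖ ^ 2 ≤ t ^ 2}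

lemma mem_cthickening_iff_infDist_le (hX : X.Nonempty) {δ : ℝ} (hδ : 0 ≤ δ) {x : M} :
    x ∈ cthickening δ X ↔ infDist x X ≤ δ := by
  rw [mem_cthickening_iff, ENNReal.le_ofReal_iff_toReal_le (infEDist_ne_top hX) hδ]
  rfl

lemma infDist_le_of_mem_cthickening {δ : ℝ} (hδ : 0 ≤ δ) {x : M} (hx : x ∈ cthickening δ X) :
    infDist x X ≤ δ :=
  ENNReal.toReal_le_of_le_ofReal hδ hx

lemma dist_toLp_prod_zero (x x' : M) (y : V) :
    dist ((WithLp.equiv 2 (M × V)).symm (x, y)) ((WithLp.equiv 2 (M × V)).symm (x', 0)) =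
      √(dist x x' ^ 2 + ‖y‖ ^ 2) := by
  rw [WithLp.prod_dist_eq_add (by norm_num), Real.sqrt_eq_rpow]
  norm_num [Real.rpow_natCast]

lemma infDist_toLp_prod_zero (hX : X.Nonempty) (x : M) (y : V) :
    infDist ((WithLp.equiv 2 (M × V)).symm (x, y))
        ((WithLp.equiv 2 (M × V)).symm '' (X ×ˢ {0})) = √(infDist x X ^ 2 + ‖y‖ ^ 2) := by
  have hI := infDist_nonneg (x := x) (s := X)
  apply le_antisymm
  · refine le_of_forall_pos_le_add fun ε hε => ?_
    obtain ⟨x', hx', hxx'⟩ := (infDist_lt_iff hX).1 (lt_add_of_pos_right (infDist x X) hε)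
    have hg := Real.sq_sqrt (by positivity : 0 ≤ infDist x X ^ 2 + ‖y‖ ^ 2)
    have hIg : infDist x X ≤ √(infDist x X ^ 2 + ‖y‖ ^ 2) :=
      Real.le_sqrt_of_sq_le (by nlinarith [sq_nonneg ‖y‖])
    calc _ ≤ √(dist x x' ^ 2 + ‖y‖ ^ 2) := by
          rw [← dist_toLp_prod_zero]
          exact infDist_le_dist_of_mem ⟨(x', 0), ⟨hx', rfl⟩, rfl⟩
      _ ≤ √(infDist x X ^ 2 + ‖y‖ ^ 2) + ε := by
          rw [Real.sqrt_le_left (by positivity)]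
          nlinarith [dist_nonneg (x := x) (y := x')]
  · refine (le_infDist ((hX.prod (singleton_nonempty 0)).image _)).2 ?_
    rintro _ ⟨⟨x', _⟩, ⟨hx', rfl⟩, rfl⟩
    rw [dist_toLp_prod_zero]
    gcongr
    exact infDist_le_dist_of_mem hx'

lemma equiv_image_cthickening_eq_tube (hX : X.Nonempty) (ht : 0 ≤ t) :
    WithLp.equiv 2 (M × V) '' cthickening t ((WithLp.equiv 2 (M × V)).symm '' (X ×ˢ {0})) =
      tube X t := by
  ext ⟨x, y⟩
  rw [Equiv.image_eq_preimage_symm, mem_preimage,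
    mem_cthickening_iff_infDist_le ((hX.prod (singleton_nonempty 0)).image _) ht,
    infDist_toLp_prod_zero hX, Real.sqrt_le_left ht]
  rfl

lemma tube_subset_biUnion (hX : X.Nonempty) (hr : Monotone r) (hr0 : r 0 = 0) (hrN : r N = t)
    (hN : N ≠ 0) :
    (tube X t : Set (M × V)) ⊆ ⋃ i ∈ Finset.range N,
      cthickening √(t ^ 2 - r i ^ 2) X ×ˢ ((‖·‖) ⁻¹' Icc (r i) (r (i + 1))) := by
  rintro ⟨x, y⟩ hxy
  change infDist x X ^ 2 + ‖y‖ ^ 2 ≤ t ^ 2 at hxy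
  have ht : 0 ≤ t := hrN ▸ hr0 ▸ hr (Nat.zero_le N)
  have hy : ‖y‖ ≤ t := (sq_le_sq₀ (norm_nonneg y) ht).1 (by nlinarith [sq_nonneg (infDist x X)])
  obtain ⟨i, hi, hyi⟩ := hr.exists_mem_Icc_succ hN (u := ‖y‖) ⟨hr0 ▸ norm_nonneg y, hrN ▸ hy⟩
  have hri : 0 ≤ r i := hr0 ▸ hr (Nat.zero_le i)
  refine mem_biUnion (Finset.mem_range.2 hi) ⟨?_, hyi⟩
  rw [mem_cthickening_iff_infDist_le hX (Real.sqrt_nonneg _)]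
  refine Real.le_sqrt_of_sq_le ?_
  nlinarith [hyi.1]

lemma prod_subset_tube (hr : Monotone r) (hrN : r N = t) {i : ℕ} (hi : i ≤ N) :
    cthickening √(t ^ 2 - r i ^ 2) X ×ˢ closedBall (0 : V) (r i) ⊆ tube X t := by
  rintro ⟨x, y⟩ ⟨hx, hy⟩
  have hy : ‖y‖ ≤ r i := mem_closedBall_zero_iff.1 hy
  have hri : r i ≤ t := hrN ▸ hr hi
  have hs : 0 ≤ t ^ 2 - r i ^ 2 := by nlinarith [norm_nonneg y]
  have hx := infDist_le_of_mem_cthickening (Real.sqrt_nonneg _) hx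
  change infDist x X ^ 2 + ‖y‖ ^ 2 ≤ t ^ 2
  nlinarith [Real.sq_sqrt hs, pow_le_pow_left₀ infDist_nonneg hx 2,
    pow_le_pow_left₀ (norm_nonneg y) hy 2]

end Tube

section ShellDecomposition

variable {M V : Type*} [MetricSpace M] [MeasurableSpace M] (μ : Measure M)
  [NormedAddCommGroup V] [MeasurableSpace V] (ν : Measure V) [SFinite ν]
  {X : Set M} {r : ℕ → ℝ} {t : ℝ} {N : ℕ}

lemma measure_tube_le_sum (hX : X.Nonempty) (hr : Monotone r) (hr0 : r 0 = 0) (hrN : r N = t)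
    (hN : N ≠ 0) :
    μ.prod ν (tube X t) ≤ ∑ i ∈ Finset.range N,
      μ (cthickening √(t ^ 2 - r i ^ 2) X) * ν ((‖·‖) ⁻¹' Icc (r i) (r (i + 1))) := by
  refine (measure_mono (tube_subset_biUnion hX hr hr0 hrN hN)).trans ?_
  refine (measure_biUnion_finset_le _ _).trans_eq ?_
  simp only [Measure.prod_prod]

lemma sum_le_measure_tube [OpensMeasurableSpace V] (hr : Monotone r) (hrN : r N = t) :
    ∑ i ∈ Finset.range N, μ (cthickening √(t ^ 2 - r (i + 1) ^ 2) X) *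
      ν ((‖·‖) ⁻¹' Ioc (r i) (r (i + 1))) ≤ μ.prod ν (tube X t) := by
  -- The tube need not be measurable (`M` carries an arbitrary σ-algebra), so it is measured
  -- through its traces on the measurable slabs `univ ×ˢ shell i`.
  set shell : ℕ → Set V := fun i => (‖·‖) ⁻¹' Ioc (r i) (r (i + 1))
  have hshell : Pairwise (Disjoint on fun i => (univ : Set M) ×ˢ shell i) := fun i j hij =>
    ((hr.pairwise_disjoint_on_Ioc_succ hij).preimage _).set_prod_right _ _
  refine le_trans ?_ ((μ.prod ν).sum_measure_inter_le hshell
    (fun i => MeasurableSet.univ.prod (measurableSet_Ioc.preimage continuous_norm.measurable))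
    (Finset.range N) _)
  refine Finset.sum_le_sum fun i hi => ?_
  rw [← Measure.prod_prod]
  refine measure_mono (subset_inter ?_ (prod_mono (subset_univ _) subset_rfl))
  exact (prod_mono subset_rfl fun y hy => mem_closedBall_zero_iff.2 hy.2).trans
    (prod_subset_tube hr hrN (Finset.mem_range.1 hi))

end ShellDecomposition

section EqualVolumeShells

variable {l : ℕ}

lemma EuclideanSpace.volume_closedBall_eq_ballVolume (x : EuclideanSpace ℝ (Fin l)) {r : ℝ}
    (hr : 0 ≤ r) : volume (closedBall x r) = ballVolume l r := by
  simpa using InnerProductSpace.volume_closedBall_eq_ballVolume x hr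

lemma EuclideanSpace.volume_norm_preimage_Ioc {a b : ℝ} (ha : 0 ≤ a) (hab : a ≤ b) :
    volume ((‖·‖) ⁻¹' Ioc a b : Set (EuclideanSpace ℝ (Fin l))) =
      ENNReal.ofReal (unitBallVol l * (b ^ l - a ^ l)) := by
  have hset : ((‖·‖) ⁻¹' Ioc a b : Set (EuclideanSpace ℝ (Fin l))) =
      closedBall 0 b \ closedBall 0 a := by
    ext; simp [and_comm]
  rw [hset, measure_sdiff (closedBall_subset_closedBall hab)
      measurableSet_closedBall.nullMeasurableSet measure_closedBall_lt_top.ne,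
    volume_closedBall_eq_ballVolume _ (ha.trans hab), volume_closedBall_eq_ballVolume _ ha,
    ballVolume, ballVolume, ← ENNReal.ofReal_sub _ (by positivity [unitBallVol_pos l]), mul_sub]

lemma EuclideanSpace.volume_norm_preimage_Icc (hl : l ≠ 0) {a b : ℝ} (ha : 0 ≤ a) (hab : a ≤ b) :
    volume ((‖·‖) ⁻¹' Icc a b : Set (EuclideanSpace ℝ (Fin l))) =
      ENNReal.ofReal (unitBallVol l * (b ^ l - a ^ l)) := by
  have : Nonempty (Fin l) := ⟨⟨0, Nat.pos_of_ne_zero hl⟩⟩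
  have hset : ((‖·‖) ⁻¹' Icc a b : Set (EuclideanSpace ℝ (Fin l))) =
      closedBall 0 b \ ball 0 a := by
    ext; simp [and_comm]
  rw [hset, measure_sdiff (ball_subset_closedBall.trans (closedBall_subset_closedBall hab))
      measurableSet_ball.nullMeasurableSet measure_ball_lt_top.ne,
    ← Measure.addHaar_closedBall_eq_addHaar_ball,
    volume_closedBall_eq_ballVolume _ (ha.trans hab), volume_closedBall_eq_ballVolume _ ha,
    ballVolume, ballVolume, ← ENNReal.ofReal_sub _ (by positivity [unitBallVol_pos l]), mul_sub]

noncomputable def equalVolumeRadius (l N : ℕ) (t : ℝ) (i : ℕ) : ℝ := t * ((i : ℝ) / N) ^ (l : ℝ)⁻¹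

variable {N : ℕ} {t : ℝ}

lemma equalVolumeRadius_nonneg (ht : 0 ≤ t) (i : ℕ) : 0 ≤ equalVolumeRadius l N t i := by
  unfold equalVolumeRadius; positivity

lemma equalVolumeRadius_monotone (ht : 0 ≤ t) : Monotone (equalVolumeRadius l N t) :=
  fun i j hij => mul_le_mul_of_nonneg_left
    (Real.rpow_le_rpow (by positivity) (by gcongr) (by positivity)) ht

lemma equalVolumeRadius_zero (hl : l ≠ 0) : equalVolumeRadius l N t 0 = 0 := by
  simp [equalVolumeRadius, hl]

lemma equalVolumeRadius_self (hN : N ≠ 0) : equalVolumeRadius l N t N = t := by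
  simp [equalVolumeRadius, hN]

lemma equalVolumeRadius_pow (hl : l ≠ 0) (i : ℕ) :
    equalVolumeRadius l N t i ^ l = t ^ l * (i / N) := by
  rw [equalVolumeRadius, mul_pow, Real.rpow_inv_natCast_pow (by positivity) hl]

lemma equalVolumeRadius_lt (ht : 0 < t) (hl : l ≠ 0) {i : ℕ} (hi : i < N) :
    equalVolumeRadius l N t i < t :=
  mul_lt_of_lt_one_right ht <| Real.rpow_lt_one (by positivity)
    ((div_lt_one (Nat.cast_pos.2 (Nat.zero_lt_of_lt hi))).2 (by exact_mod_cast hi)) (by positivity)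

lemma equalVolumeRadius_succ_pow_sub (hl : l ≠ 0) (i : ℕ) :
    equalVolumeRadius l N t (i + 1) ^ l - equalVolumeRadius l N t i ^ l = t ^ l / N := by
  rw [equalVolumeRadius_pow hl, equalVolumeRadius_pow hl]
  push_cast
  ring

lemma volume_equalVolumeShell_Icc (ht : 0 ≤ t) (hl : l ≠ 0) (i : ℕ) :
    volume ((‖·‖) ⁻¹' Icc (equalVolumeRadius l N t i) (equalVolumeRadius l N t (i + 1)) :
      Set (EuclideanSpace ℝ (Fin l))) = ENNReal.ofReal (unitBallVol l * (t ^ l / N)) := by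
  rw [EuclideanSpace.volume_norm_preimage_Icc hl (equalVolumeRadius_nonneg ht i)
    (equalVolumeRadius_monotone ht i.le_succ), equalVolumeRadius_succ_pow_sub hl]

lemma volume_equalVolumeShell_Ioc (ht : 0 ≤ t) (hl : l ≠ 0) (i : ℕ) :
    volume ((‖·‖) ⁻¹' Ioc (equalVolumeRadius l N t i) (equalVolumeRadius l N t (i + 1)) :
      Set (EuclideanSpace ℝ (Fin l))) = ENNReal.ofReal (unitBallVol l * (t ^ l / N)) := by
  rw [EuclideanSpace.volume_norm_preimage_Ioc (equalVolumeRadius_nonneg ht i)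
    (equalVolumeRadius_monotone ht i.le_succ), equalVolumeRadius_succ_pow_sub hl]

end EqualVolumeShells

section EuclideanComparison

noncomputable def sliceRadius (l N : ℕ) (t : ℝ) (i : ℕ) : ℝ :=
  √(t ^ 2 - equalVolumeRadius l N t i ^ 2)

variable {m l N : ℕ} {t : ℝ}

lemma sliceRadius_zero (ht : 0 ≤ t) (hl : l ≠ 0) : sliceRadius l N t 0 = t := by
  simp [sliceRadius, equalVolumeRadius_zero hl, Real.sqrt_sq ht]

lemma sliceRadius_le (ht : 0 ≤ t) (i : ℕ) : sliceRadius l N t i ≤ t :=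
  (Real.sqrt_le_left ht).2 (sub_le_self _ (sq_nonneg _))

lemma sliceRadius_pos (ht : 0 < t) (hl : l ≠ 0) {i : ℕ} (hi : i < N) : 0 < sliceRadius l N t i :=
  Real.sqrt_pos.2 <| sub_pos.2 <| pow_lt_pow_left₀ (equalVolumeRadius_lt ht hl hi)
    (equalVolumeRadius_nonneg ht.le i) two_ne_zero

lemma volume_tube_singleton_zero (ht : 0 ≤ t) :
    (volume : Measure (EuclideanSpace ℝ (Fin m))).prod
      (volume : Measure (EuclideanSpace ℝ (Fin l))) (tube {0} t) = ballVolume (m + l) t := by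
  have hfin :
      finrank ℝ (WithLp 2 (EuclideanSpace ℝ (Fin m) × EuclideanSpace ℝ (Fin l))) = m + l := by
    rw [(WithLp.linearEquiv 2 ℝ _).finrank_eq]; simp
  rw [← equiv_image_cthickening_eq_tube (singleton_nonempty 0) ht, singleton_prod_singleton,
    image_singleton, cthickening_singleton _ ht, Equiv.image_eq_preimage_symm, ← hfin,
    ← InnerProductSpace.volume_closedBall_eq_ballVolume _ ht]
  exact (WithLp.volume_preserving_toLp _ _).measure_preimage
    measurableSet_closedBall.nullMeasurableSet

lemma sum_ballVolume_sliceRadius_succ_le (ht : 0 ≤ t) (hl : l ≠ 0) (hN : N ≠ 0) :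
    ∑ i ∈ Finset.range N, ballVolume m (sliceRadius l N t (i + 1)) *
      ENNReal.ofReal (unitBallVol l * (t ^ l / N)) ≤ ballVolume (m + l) t := by
  simpa only [sliceRadius, cthickening_singleton _ (Real.sqrt_nonneg _),
    volume_tube_singleton_zero ht,
    EuclideanSpace.volume_closedBall_eq_ballVolume _ (Real.sqrt_nonneg _),
    volume_equalVolumeShell_Ioc ht hl] using
    sum_le_measure_tube volume (volume : Measure (EuclideanSpace ℝ (Fin l)))
      (X := {(0 : EuclideanSpace ℝ (Fin m))}) (equalVolumeRadius_monotone (l := l) ht)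
      (equalVolumeRadius_self hN)

lemma ballVolume_le_sum_sliceRadius (ht : 0 ≤ t) (hl : l ≠ 0) (hN : N ≠ 0) :
    ballVolume (m + l) t ≤ ∑ i ∈ Finset.range N, ballVolume m (sliceRadius l N t i) *
      ENNReal.ofReal (unitBallVol l * (t ^ l / N)) := by
  simpa only [sliceRadius, cthickening_singleton _ (Real.sqrt_nonneg _),
    volume_tube_singleton_zero ht,
    EuclideanSpace.volume_closedBall_eq_ballVolume _ (Real.sqrt_nonneg _),
    volume_equalVolumeShell_Icc ht hl] using
    measure_tube_le_sum volume (volume : Measure (EuclideanSpace ℝ (Fin l)))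
      (X := {(0 : EuclideanSpace ℝ (Fin m))}) (singleton_nonempty 0)
      (equalVolumeRadius_monotone (l := l) ht) (equalVolumeRadius_zero hl)
      (equalVolumeRadius_self hN) hN

end EuclideanComparison

section Comparison

variable {M : Type*} [MetricSpace M] [MeasurableSpace M] {μ : Measure M} {X : Set M}
  {m l : ℕ} {c : ℝ≥0∞} {t : ℝ}

lemma tendsto_ballVolume_mul_shellVolume (m l : ℕ) (t : ℝ) :
    Tendsto (fun N : ℕ => ballVolume m t * ENNReal.ofReal (unitBallVol l * (t ^ l / N))) atTop
      (𝓝 0) := by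
  have h : Tendsto (fun N : ℕ => unitBallVol l * t ^ l / N) atTop (𝓝 0) :=
    tendsto_const_div_atTop_nhds_zero_nat _
  simpa [mul_div_assoc] using ENNReal.Tendsto.const_mul (a := ballVolume m t)
    (ENNReal.tendsto_ofReal h) (Or.inr ENNReal.ofReal_ne_top)

lemma measure_tube_le_of_forall_le (hX : X.Nonempty) (hl : l ≠ 0) (hc : c ≠ ∞) (ht : 0 < t)
    (hV : ∀ u ∈ Ioc 0 t, μ (cthickening u X) ≤ c * ballVolume m u) :
    μ.prod (volume : Measure (EuclideanSpace ℝ (Fin l))) (tube X t) ≤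
      c * ballVolume (m + l) t := by
  have hlim := ENNReal.Tendsto.const_mul
    ((tendsto_ballVolume_mul_shellVolume m l t).const_add (ballVolume (m + l) t)) (Or.inr hc)
  rw [add_zero] at hlim
  refine ge_of_tendsto hlim ((eventually_ne_atTop 0).mono fun N hN => ?_)
  obtain ⟨N, rfl⟩ := Nat.exists_eq_add_one_of_ne_zero hN
  set w := ENNReal.ofReal (unitBallVol l * (t ^ l / (N + 1 : ℕ)))
  calc μ.prod volume (tube X t)
      ≤ ∑ i ∈ Finset.range (N + 1), μ (cthickening (sliceRadius l (N + 1) t i) X) * w := by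
        simpa only [sliceRadius, volume_equalVolumeShell_Icc ht.le hl] using
          measure_tube_le_sum μ (volume : Measure (EuclideanSpace ℝ (Fin l))) hX
          (equalVolumeRadius_monotone ht.le) (equalVolumeRadius_zero hl)
          (equalVolumeRadius_self hN) hN
    _ ≤ ∑ i ∈ Finset.range (N + 1), c * (ballVolume m (sliceRadius l (N + 1) t i) * w) := by
        refine Finset.sum_le_sum fun i hi => ?_
        rw [← mul_assoc]
        gcongr ?_ * _
        exact hV _ ⟨sliceRadius_pos ht hl (Finset.mem_range.1 hi), sliceRadius_le ht.le i⟩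
    _ = c * (∑ i ∈ Finset.range N, ballVolume m (sliceRadius l (N + 1) t (i + 1)) * w +
          ballVolume m t * w) := by
        rw [← Finset.mul_sum, Finset.sum_range_succ', sliceRadius_zero ht.le hl]
    _ ≤ c * (ballVolume (m + l) t + ballVolume m t * w) := by
        gcongr
        exact (Finset.sum_le_sum_of_subset (Finset.range_subset_range.2 N.le_succ)).trans
          (sum_ballVolume_sliceRadius_succ_le ht.le hl hN)

lemma le_measure_tube_of_forall_le (hl : l ≠ 0) (hc : c ≠ ∞) (ht : 0 < t)
    (hV : ∀ u ∈ Ioc 0 t, c * ballVolume m u ≤ μ (cthickening u X)) :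
    c * ballVolume (m + l) t ≤
      μ.prod (volume : Measure (EuclideanSpace ℝ (Fin l))) (tube X t) := by
  have hlim := (ENNReal.Tendsto.const_mul (tendsto_ballVolume_mul_shellVolume m l t)
    (Or.inr hc)).const_add (μ.prod (volume : Measure (EuclideanSpace ℝ (Fin l))) (tube X t))
  rw [mul_zero, add_zero] at hlim
  refine ge_of_tendsto hlim ((eventually_ne_atTop 0).mono fun N hN => ?_)
  obtain ⟨N, rfl⟩ := Nat.exists_eq_add_one_of_ne_zero hN
  set w := ENNReal.ofReal (unitBallVol l * (t ^ l / (N + 1 : ℕ)))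
  calc c * ballVolume (m + l) t
      ≤ c * ∑ i ∈ Finset.range (N + 1), ballVolume m (sliceRadius l (N + 1) t i) * w := by
        gcongr
        exact ballVolume_le_sum_sliceRadius ht.le hl hN
    _ = ∑ i ∈ Finset.range N, c * ballVolume m (sliceRadius l (N + 1) t (i + 1)) * w +
          c * (ballVolume m t * w) := by
        simp only [Finset.sum_range_succ', sliceRadius_zero ht.le hl, mul_add, Finset.mul_sum,
          mul_assoc]
    _ ≤ ∑ i ∈ Finset.range (N + 1), μ (cthickening (sliceRadius l (N + 1) t (i + 1)) X) * w +
          c * (ballVolume m t * w) := by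
        gcongr ?_ + _
        refine (Finset.sum_le_sum fun i hi => ?_).trans
          (Finset.sum_le_sum_of_subset (Finset.range_subset_range.2 N.le_succ))
        have hi : i + 1 < N + 1 := Nat.succ_lt_succ (Finset.mem_range.1 hi)
        gcongr ?_ * _
        exact hV _ ⟨sliceRadius_pos ht hl hi, sliceRadius_le ht.le _⟩
    _ ≤ μ.prod volume (tube X t) + c * (ballVolume m t * w) := by
        gcongr ?_ + _
        simpa only [sliceRadius, volume_equalVolumeShell_Ioc ht.le hl] using
          sum_le_measure_tube μ (volume : Measure (EuclideanSpace ℝ (Fin l))) (X := X)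
            (equalVolumeRadius_monotone (l := l) ht.le) (equalVolumeRadius_self hN)

end Comparison

section MinkowskiContent

variable {ν ν' : ℝ → ℝ≥0∞} {m m' : ℕ}

lemma upperMinkOf_le_of_forall
    (h : ∀ c δ, c ≠ ∞ → (∀ u ∈ Ioo 0 δ, ν u ≤ c * ballVolume m u) →
      ∀ t ∈ Ioo 0 δ, ν' t ≤ c * ballVolume m' t) :
    upperMinkOf ν' m' ≤ upperMinkOf ν m := by
  refine le_of_forall_gt_imp_ge_of_dense fun c hc => ?_
  rcases eq_or_ne c ∞ with rfl | hc'
  · exact le_top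
  obtain ⟨δ, hδ, hsub⟩ := mem_nhdsGT_iff_exists_Ioo_subset.1 (eventually_lt_of_limsup_lt hc)
  have hν : ∀ u ∈ Ioo 0 δ, ν u ≤ c * ballVolume m u := fun u hu =>
    (ENNReal.div_le_iff (ballVolume_ne_zero m hu.1) ENNReal.ofReal_ne_top).1 (hsub hu).le
  refine limsup_le_of_le (by isBoundedDefault) ?_
  filter_upwards [Ioo_mem_nhdsGT hδ] with t ht
  exact (ENNReal.div_le_iff (ballVolume_ne_zero m' ht.1) ENNReal.ofReal_ne_top).2
    (h c δ hc' hν t ht)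

lemma lowerMinkOf_le_of_forall
    (h : ∀ c δ, c ≠ ∞ → (∀ u ∈ Ioo 0 δ, c * ballVolume m u ≤ ν u) →
      ∀ t ∈ Ioo 0 δ, c * ballVolume m' t ≤ ν' t) :
    lowerMinkOf ν m ≤ lowerMinkOf ν' m' := by
  refine le_of_forall_lt_imp_le_of_dense fun c hc => ?_
  obtain ⟨δ, hδ, hsub⟩ := mem_nhdsGT_iff_exists_Ioo_subset.1 (eventually_lt_of_lt_liminf hc)
  have hν : ∀ u ∈ Ioo 0 δ, c * ballVolume m u ≤ ν u := fun u hu =>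
    (ENNReal.le_div_iff_mul_le (Or.inl (ballVolume_ne_zero m hu.1))
      (Or.inl ENNReal.ofReal_ne_top)).1 (hsub hu).le
  refine le_liminf_of_le (by isBoundedDefault) ?_
  filter_upwards [Ioo_mem_nhdsGT hδ] with t ht
  exact (ENNReal.le_div_iff_mul_le (Or.inl (ballVolume_ne_zero m' ht.1))
    (Or.inl ENNReal.ofReal_ne_top)).2 (h c δ (hc.trans_le le_top).ne hν t ht)

end MinkowskiContent

theorem stmt_11_general (M : Type*) [MetricSpace M] [MeasureSpace M]
    (n k l : ℕ) (hkn : k ≤ n) (hl : 1 ≤ l)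
    (X : Set M) (hXne : X.Nonempty) :
    upperMinkOf
        (fun t =>
          ((volume : Measure M).prod (volume : Measure (EuclideanSpace ℝ (Fin l))))
            ((WithLp.equiv 2 (M × EuclideanSpace ℝ (Fin l))) ''
              Metric.cthickening t
                ((WithLp.equiv 2 (M × EuclideanSpace ℝ (Fin l))).symm '' (X ×ˢ {0}))))
        (n + l - k) ≤
      upperMinkOf (fun t => volume (Metric.cthickening t X)) (n - k) ∧
    lowerMinkOf (fun t => volume (Metric.cthickening t X)) (n - k) ≤
      lowerMinkOf
        (fun t =>
          ((volume : Measure M).prod (volume : Measure (EuclideanSpace ℝ (Fin l))))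
            ((WithLp.equiv 2 (M × EuclideanSpace ℝ (Fin l))) ''
              Metric.cthickening t
                ((WithLp.equiv 2 (M × EuclideanSpace ℝ (Fin l))).symm '' (X ×ˢ {0}))))
        (n + l - k) := by
  rw [show n + l - k = n - k + l by omega]
  constructor
  · refine upperMinkOf_le_of_forall fun c δ hc hV t ht => ?_
    rw [equiv_image_cthickening_eq_tube hXne ht.1.le]
    exact measure_tube_le_of_forall_le hXne (by omega) hc ht.1
      fun u hu => hV u ⟨hu.1, hu.2.trans_lt ht.2⟩
  · refine lowerMinkOf_le_of_forall fun c δ hc hV t ht => ?_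
    rw [equiv_image_cthickening_eq_tube hXne ht.1.le]
    exact le_measure_tube_of_forall_le (by omega) hc ht.1
      fun u hu => hV u ⟨hu.1, hu.2.trans_lt ht.2⟩

/-- for a bounded subset `X` of an `n`-dimensional complete (Riemannian)
metric measure space `M`, identifying `X` with `X × {0}` in the `L²`-product
`M × ℝ^ℓ` with the product volume, the upper Minkowski `k`-content does not increase
and the lower Minkowski `k`-content does not decrease when passing to the product. -/
theorem stmt_11 (M : Type*) [MetricSpace M] [CompleteSpace M] [MeasureSpace M]
    [SigmaFinite (volume : Measure M)]
    (n k l : ℕ) (hkn : k ≤ n) (hl : 1 ≤ l)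
    (X : Set M) (hX : Bornology.IsBounded X) (hXne : X.Nonempty) :
    upperMinkOf
        (fun t =>
          ((volume : Measure M).prod (volume : Measure (EuclideanSpace ℝ (Fin l))))
            ((WithLp.equiv 2 (M × EuclideanSpace ℝ (Fin l))) ''
              Metric.cthickening t
                ((WithLp.equiv 2 (M × EuclideanSpace ℝ (Fin l))).symm '' (X ×ˢ {0}))))
        (n + l - k) ≤
      upperMinkOf (fun t => volume (Metric.cthickening t X)) (n - k) ∧
    lowerMinkOf (fun t => volume (Metric.cthickening t X)) (n - k) ≤
      lowerMinkOf
        (fun t =>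
          ((volume : Measure M).prod (volume : Measure (EuclideanSpace ℝ (Fin l))))
            ((WithLp.equiv 2 (M × EuclideanSpace ℝ (Fin l))) ''
              Metric.cthickening t
                ((WithLp.equiv 2 (M × EuclideanSpace ℝ (Fin l))).symm '' (X ×ˢ {0}))))
        (n + l - k) :=
  stmt_11_general M n k l hkn hl X hXne
end

section
/- Let f : (−1,1)ⁿ → ℝ be given by f(x₁,…,xₙ) = max{x₁,…,xₙ}. Then for n ≥ 3 and small t > 0, the volume of the t-neighborhood (in the ℓ∞ norm) of the fiber f⁻¹(0) intersected with (−1,1)ⁿ is 2nt + o(t) as t → 0⁺, which is strictly less than t·2ⁿ for small t. -/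
/-!
A point `y` of the cube lies within `ℓ∞`-distance `t` of the fiber `{max = 0}` exactly when
`|max y| < t`: the maximum is `1`-Lipschitz for the sup metric, and conversely shifting or
clamping the coordinates moves `y` onto the fiber by at most `|max y|`. Hence for `0 < t < 1`
the neighborhood is the box `(-1, t)ⁿ` minus the box `(-1, -t]ⁿ`, of volume
`(1 + t)ⁿ - (1 - t)ⁿ = 2nt + o(t)`, and `2n < 2ⁿ` once `n ≥ 3`.
-/

open MeasureTheory Filter Set
open scoped Topology

namespace MaxFiber

variable {ι : Type*} [Fintype ι]

def cube (ι : Type*) : Set (ι → ℝ) := {x | ∀ i, x i ∈ Ioo (-1 : ℝ) 1}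

def fiber (ι : Type*) : Set (ι → ℝ) := {x | x ∈ cube ι ∧ (⨆ i, x i) = 0}

variable [Nonempty ι]

lemma iSup_le_iSup_add_dist (y z : ι → ℝ) : ⨆ i, y i ≤ (⨆ i, z i) + dist y z :=
  ciSup_le fun i => calc
    y i ≤ z i + dist (y i) (z i) := by
      linarith [le_abs_self (y i - z i), Real.dist_eq (y i) (z i)]
    _ ≤ (⨆ i, z i) + dist y z :=
      add_le_add (le_ciSup (Finite.bddAbove_range z) i) (dist_le_pi_dist y z i)

lemma abs_iSup_sub_iSup_le_dist (y z : ι → ℝ) : |(⨆ i, y i) - ⨆ i, z i| ≤ dist y z :=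
  abs_sub_le_iff.mpr ⟨by linarith [iSup_le_iSup_add_dist y z],
    by linarith [iSup_le_iSup_add_dist z y, dist_comm y z]⟩

lemma exists_mem_fiber_dist_lt {t : ℝ} {y : ι → ℝ} (hy : y ∈ cube ι)
    (hyt : |⨆ i, y i| < t) :
    ∃ z ∈ fiber ι, dist y z < t := by
  set c := ⨆ i, y i
  have hyc : ∀ i, y i ≤ c := fun i => le_ciSup (Finite.bddAbove_range y) i
  obtain ⟨i₀, hi₀⟩ : ∃ i₀, y i₀ = c := exists_eq_ciSup_of_finite
  have ht : 0 < t := (abs_nonneg c).trans_lt hyt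
  obtain ⟨hct, htc⟩ := abs_lt.mp hyt
  -- shift by `-c` when `c < 0`, clamp at `0` when `c ≥ 0`
  refine ⟨fun i => min (y i - min c 0) 0, ⟨fun i => ?_, ?_⟩,
    (dist_pi_lt_iff ht).mpr fun i => ?_⟩
  · exact ⟨lt_min (by linarith [(hy i).1, min_le_right c 0]) (by norm_num),
      (min_le_right _ _).trans_lt one_pos⟩
  · refine le_antisymm (ciSup_le fun i => min_le_right _ _) ?_
    refine le_trans ?_ (le_ciSup (Finite.bddAbove_range _) i₀)
    simp only [hi₀]
    exact le_min (by linarith [min_le_left c 0]) le_rfl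
  · rw [Real.dist_eq, abs_lt]
    constructor <;>
    cases min_cases c 0 <;> cases min_cases (y i - min c 0) 0 <;> linarith [hyc i]

lemma mem_thickening_fiber_iff {t : ℝ} {y : ι → ℝ} (hy : y ∈ cube ι) :
    y ∈ Metric.thickening t (fiber ι) ↔ |⨆ i, y i| < t := by
  refine ⟨fun h => ?_, fun h => Metric.mem_thickening_iff.mpr (exists_mem_fiber_dist_lt hy h)⟩
  obtain ⟨z, ⟨-, hz⟩, hyz⟩ := Metric.mem_thickening_iff.mp h
  simpa [hz] using (abs_iSup_sub_iSup_le_dist y z).trans_lt hyz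

lemma thickening_fiber_inter_cube {t : ℝ} (ht₁ : t < 1) :
    Metric.thickening t (fiber ι) ∩ cube ι =
      univ.pi (fun _ => Ioo (-1 : ℝ) t) \ univ.pi (fun _ => Ioc (-1 : ℝ) (-t)) := by
  ext y
  obtain ⟨i₀, hi₀⟩ : ∃ i₀, y i₀ = ⨆ i, y i := exists_eq_ciSup_of_finite
  have hyc : ∀ i, y i ≤ ⨆ i, y i := fun i => le_ciSup (Finite.bddAbove_range y) i
  simp only [mem_inter_iff, Set.mem_sdiff, mem_univ_pi, mem_Ioo, mem_Ioc, not_forall, not_and,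
    not_le]
  constructor
  · rintro ⟨hth, hy⟩
    obtain ⟨hlo, hhi⟩ := abs_lt.mp ((mem_thickening_fiber_iff hy).mp hth)
    exact ⟨fun i => ⟨(hy i).1, (hyc i).trans_lt hhi⟩, ⟨i₀, fun _ => hi₀ ▸ hlo⟩⟩
  · rintro ⟨hbox, j, hj⟩
    have hy : y ∈ cube ι := fun i => ⟨(hbox i).1, (hbox i).2.trans ht₁⟩
    have hlo : -t < ⨆ i, y i := (hj (hbox j).1).trans_le (hyc j)
    exact ⟨(mem_thickening_fiber_iff hy).mpr (abs_lt.mpr ⟨hlo, hi₀ ▸ (hbox i₀).2⟩),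
      hy⟩

lemma volume_thickening_fiber_inter_cube {t : ℝ} (ht : 0 < t) (ht₁ : t < 1) :
    (volume (Metric.thickening t (fiber ι) ∩ cube ι)).toReal =
      (1 + t) ^ Fintype.card ι - (1 - t) ^ Fintype.card ι := by
  have hsub : univ.pi (fun _ : ι => Ioc (-1 : ℝ) (-t)) ⊆ univ.pi (fun _ => Ioo (-1 : ℝ) t) :=
    pi_mono fun _ _ => Ioc_subset_Ioo_right (by linarith)
  have hbig : volume (univ.pi fun _ : ι => Ioo (-1 : ℝ) t) =
      ENNReal.ofReal (1 + t) ^ Fintype.card ι := by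
    rw [volume_pi_pi, Finset.prod_const, Real.volume_Ioo, Finset.card_univ, sub_neg_eq_add,
      add_comm]
  have hsmall : volume (univ.pi fun _ : ι => Ioc (-1 : ℝ) (-t)) =
      ENNReal.ofReal (1 - t) ^ Fintype.card ι := by
    rw [volume_pi_pi, Finset.prod_const, Real.volume_Ioc, Finset.card_univ, sub_neg_eq_add,
      neg_add_eq_sub]
  rw [thickening_fiber_inter_cube ht₁,
    measure_sdiff hsub (MeasurableSet.univ_pi fun _ => measurableSet_Ioc).nullMeasurableSet
      (by simp [hsmall]), hbig, hsmall, ENNReal.toReal_sub_of_le ?_ (by simp)]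
  · simp only [ENNReal.toReal_pow, ENNReal.toReal_ofReal (by linarith : (0 : ℝ) ≤ 1 + t),
      ENNReal.toReal_ofReal (by linarith : (0 : ℝ) ≤ 1 - t)]
  · gcongr
    linarith

end MaxFiber

lemma isLittleO_one_add_pow_sub_one_sub_pow (n : ℕ) :
    (fun t : ℝ => (1 + t) ^ n - (1 - t) ^ n - 2 * n * t) =o[𝓝 0] fun t => t := by
  have hderiv : HasDerivAt (fun t : ℝ => (1 + t) ^ n - (1 - t) ^ n) (2 * n) 0 := by
    refine ((((hasDerivAt_id (0 : ℝ)).const_add 1).pow n).sub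
      (((hasDerivAt_id (0 : ℝ)).const_sub 1).pow n)).congr_deriv ?_
    simp only [id, add_zero, sub_zero, one_pow]
    ring
  simpa [mul_comm] using hasDerivAt_iff_isLittleO_nhds_zero.mp hderiv

lemma eventually_lt_mul_of_isLittleO {g : ℝ → ℝ} {a b : ℝ}
    (h : (fun t => g t - a * t) =o[𝓝[>] 0] fun t => t) (hab : a < b) :
    ∀ᶠ t in 𝓝[>] 0, g t < t * b := by
  filter_upwards [h.def (half_pos (sub_pos.mpr hab)), self_mem_nhdsWithin] with t hg (ht : 0 < t)
  rw [Real.norm_eq_abs, Real.norm_eq_abs, abs_of_pos ht] at hg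
  nlinarith [le_abs_self (g t - a * t)]

lemma Nat.two_mul_lt_two_pow {n : ℕ} (hn : 3 ≤ n) : 2 * n < 2 ^ n := by
  induction n, hn using Nat.le_induction with
  | base => norm_num
  | succ k _ ih => rw [pow_succ]; omega

open MaxFiber in
/-- for `f(x) = max{x₁,…,xₙ}` on the open cube `(−1,1)ⁿ` with the `ℓ∞`
norm, the volume of the `t`-neighborhood of the fiber `f⁻¹(0)` inside the cube is
`2nt + o(t)` as `t → 0⁺`, which is strictly less than `t·2ⁿ` for small `t` once `n ≥ 3`. -/
theorem stmt_13 (n : ℕ) (hn : 3 ≤ n) :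
    (fun t : ℝ =>
        (volume (Metric.thickening t
            {x : Fin n → ℝ | (∀ i, x i ∈ Set.Ioo (-1 : ℝ) 1) ∧ (⨆ i, x i) = 0} ∩
          {x : Fin n → ℝ | ∀ i, x i ∈ Set.Ioo (-1 : ℝ) 1})).toReal - 2 * n * t)
      =o[𝓝[>] (0 : ℝ)] (fun t => t) ∧
    ∀ᶠ t in 𝓝[>] (0 : ℝ),
      (volume (Metric.thickening t
          {x : Fin n → ℝ | (∀ i, x i ∈ Set.Ioo (-1 : ℝ) 1) ∧ (⨆ i, x i) = 0} ∩
        {x : Fin n → ℝ | ∀ i, x i ∈ Set.Ioo (-1 : ℝ) 1})).toReal < t * 2 ^ n := by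
  have : Nonempty (Fin n) := Fin.pos_iff_nonempty.mp (by omega)
  have hvol : (fun t : ℝ =>
      (volume (Metric.thickening t (fiber (Fin n)) ∩ cube (Fin n))).toReal - 2 * n * t)
        =ᶠ[𝓝[>] 0] fun t => (1 + t) ^ n - (1 - t) ^ n - 2 * n * t := by
    filter_upwards [Ioo_mem_nhdsGT one_pos] with t ht
    simpa using volume_thickening_fiber_inter_cube (ι := Fin n) ht.1 ht.2
  have hlittle := hvol.trans_isLittleO
    ((isLittleO_one_add_pow_sub_one_sub_pow n).mono nhdsWithin_le_nhds)
  exact ⟨hlittle,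
    eventually_lt_mul_of_isLittleO hlittle (by exact_mod_cast Nat.two_mul_lt_two_pow hn)⟩
end
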